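/- arXiv:2307.02621 — 2 statements merged into one kernel-verified Lean document; each statement's English description precedes it below -/
import Mathlib

section
/- Let C_e and C_micro be symmetric positive definite linear maps on Sym(3) with ⟨C_e σ, σ⟩ ≥ c_e|σ|² and ⟨C_micro σ, σ⟩ ≥ c_m|σ|² for positive constants c_e, c_m. Define the block operator 𝔸 on Sym(3) × Sym(3) by 𝔸(σ₁, σ₂) = (C_e(σ₁ - σ₂), -C_e(σ₁ - σ₂) + C_micro σ₂). Then ⟨𝔸(σ₁,σ₂), (σ₁,σ₂)⟩ ≥ (2/9)·min(c_e, c_m)·(|σ₁|² + |σ₂|²) for all (σ₁, σ₂). -/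
/-!
With `d = σ₁ - σ₂` the quadratic form of `𝔸` is `⟨C_e d, d⟩ + ⟨C_micro σ₂, σ₂⟩`, which is at least
`min(c_e, c_m)·(|d|² + |σ₂|²)`. Since `|σ₁|² ≤ 2|d|² + 2|σ₂|²`, this bounds it below by
`min(c_e, c_m)/3·(|σ₁|² + |σ₂|²)`, and `1/3 ≥ 2/9`.
-/

open Matrix

/-- Frobenius inner product on 3×3 real matrices. -/
noncomputable def finner (A B : Matrix (Fin 3) (Fin 3) ℝ) : ℝ := ∑ i, ∑ j, A i j * B i j

lemma finner_self_nonneg (A : Matrix (Fin 3) (Fin 3) ℝ) : 0 ≤ finner A A :=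
  Finset.sum_nonneg fun i _ => Finset.sum_nonneg fun j _ => mul_self_nonneg (A i j)

lemma finner_add_neg_left_add (X Y A B : Matrix (Fin 3) (Fin 3) ℝ) :
    finner X A + finner (-X + Y) B = finner X (A - B) + finner Y B := by
  simp only [finner, Matrix.add_apply, Matrix.neg_apply, Matrix.sub_apply,
    ← Finset.sum_add_distrib]
  exact Finset.sum_congr rfl fun i _ => Finset.sum_congr rfl fun j _ => by ring

/-- Entrywise, `a² ≤ 2(a - b)² + 2b²` is `(a - 2b)² ≥ 0`. -/
lemma finner_self_add_le_three_mul (A B : Matrix (Fin 3) (Fin 3) ℝ) :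
    finner A A + finner B B ≤ 3 * (finner (A - B) (A - B) + finner B B) := by
  simp only [finner, Matrix.sub_apply, ← Finset.sum_add_distrib, Finset.mul_sum]
  exact Finset.sum_le_sum fun i _ => Finset.sum_le_sum fun j _ => by
    nlinarith [sq_nonneg (A i j - 2 * B i j), sq_nonneg (B i j)]

theorem stmt1_general
    (Ce Cm : Matrix (Fin 3) (Fin 3) ℝ →ₗ[ℝ] Matrix (Fin 3) (Fin 3) ℝ)
    (ce cm : ℝ) (hce : 0 < ce) (hcm : 0 < cm)
    (hCePD : ∀ σ : Matrix (Fin 3) (Fin 3) ℝ, σᵀ = σ → finner (Ce σ) σ ≥ ce * finner σ σ)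
    (hCmPD : ∀ σ : Matrix (Fin 3) (Fin 3) ℝ, σᵀ = σ → finner (Cm σ) σ ≥ cm * finner σ σ)
    (σ₁ σ₂ : Matrix (Fin 3) (Fin 3) ℝ) (h1 : σ₁ᵀ = σ₁) (h2 : σ₂ᵀ = σ₂) :
    finner (Ce (σ₁ - σ₂)) σ₁ + finner (-(Ce (σ₁ - σ₂)) + Cm σ₂) σ₂
      ≥ (2 / 9) * min ce cm * (finner σ₁ σ₁ + finner σ₂ σ₂) := by
  set m := min ce cm
  have hm : 0 ≤ m := (lt_min hce hcm).le
  have hsym : (σ₁ - σ₂)ᵀ = σ₁ - σ₂ := by rw [transpose_sub, h1, h2]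
  have hd := finner_self_nonneg (σ₁ - σ₂)
  have hσ₂ := finner_self_nonneg σ₂
  have hS := finner_self_add_le_three_mul σ₁ σ₂
  calc (2 / 9) * m * (finner σ₁ σ₁ + finner σ₂ σ₂)
      ≤ m * (finner (σ₁ - σ₂) (σ₁ - σ₂) + finner σ₂ σ₂) := by
        nlinarith [mul_le_mul_of_nonneg_left hS hm, finner_self_nonneg σ₁]
    _ ≤ ce * finner (σ₁ - σ₂) (σ₁ - σ₂) + cm * finner σ₂ σ₂ := by
        nlinarith [mul_le_mul_of_nonneg_right (min_le_left ce cm) hd,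
          mul_le_mul_of_nonneg_right (min_le_right ce cm) hσ₂]
    _ ≤ finner (Ce (σ₁ - σ₂)) (σ₁ - σ₂) + finner (Cm σ₂) σ₂ :=
        add_le_add (hCePD _ hsym) (hCmPD _ h2)
    _ = _ := (finner_add_neg_left_add _ _ _ _).symm

/-- Positive definiteness of the block operator
`𝔸(σ₁,σ₂) = (C_e(σ₁-σ₂), -C_e(σ₁-σ₂) + C_micro σ₂)` on `Sym(3) × Sym(3)`:
`⟨𝔸(σ₁,σ₂),(σ₁,σ₂)⟩ ≥ (2/9)·min(c_e,c_m)·(|σ₁|² + |σ₂|²)`. -/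
theorem stmt1
    (Ce Cm : Matrix (Fin 3) (Fin 3) ℝ →ₗ[ℝ] Matrix (Fin 3) (Fin 3) ℝ)
    (ce cm : ℝ) (hce : 0 < ce) (hcm : 0 < cm)
    (hCeSym : ∀ σ τ : Matrix (Fin 3) (Fin 3) ℝ, σᵀ = σ → τᵀ = τ →
      finner (Ce σ) τ = finner σ (Ce τ))
    (hCmSym : ∀ σ τ : Matrix (Fin 3) (Fin 3) ℝ, σᵀ = σ → τᵀ = τ →
      finner (Cm σ) τ = finner σ (Cm τ))
    (hCePD : ∀ σ : Matrix (Fin 3) (Fin 3) ℝ, σᵀ = σ → finner (Ce σ) σ ≥ ce * finner σ σ)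
    (hCmPD : ∀ σ : Matrix (Fin 3) (Fin 3) ℝ, σᵀ = σ → finner (Cm σ) σ ≥ cm * finner σ σ)
    (σ₁ σ₂ : Matrix (Fin 3) (Fin 3) ℝ) (h1 : σ₁ᵀ = σ₁) (h2 : σ₂ᵀ = σ₂) :
    finner (Ce (σ₁ - σ₂)) σ₁ + finner (-(Ce (σ₁ - σ₂)) + Cm σ₂) σ₂
      ≥ (2 / 9) * min ce cm * (finner σ₁ σ₁ + finner σ₂ σ₂) :=
  stmt1_general Ce Cm ce cm hce hcm hCePD hCmPD σ₁ σ₂ h1 h2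
end

section
/- Let H = H₀¹(Ω;ℝ³) × H₀(Curl;Ω) be the product Hilbert space, and let a be the bilinear form of the relaxed micromorphic model as above with bounded measurable coefficients C_e, C_micro, L_c satisfying symmetry and uniform positive definiteness (on symmetric matrices for C_e, C_micro, on all matrices for L_c), on a bounded Lipschitz domain Ω where the incompatible Korn inequality holds. Then for every f ∈ H^{-1}(Ω;ℝ³) and every M in the dual of H₀(Curl;Ω), there exists a unique pair (u,P) ∈ H such that a((u,P),(v,W)) = ⟨f,v⟩ + ⟨M,W⟩ for all (v,W) ∈ H. -/
/-!
Lax–Milgram on the Hilbert space `H₀¹ × H₀(Curl)` with the `ℓ²` product norm. Coercivity: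
writing `D = sym ∇u - sym P`, positive definiteness of the coefficients bounds `a((u,P),(u,P))`
below by a multiple of `‖D‖² + ‖sym P‖² + ‖Curl P‖²`. Since `sym ∇u = D + sym P`, Korn's
inequality controls `‖u‖²` by `2‖D‖² + 2‖sym P‖²`, and the incompatible Korn inequality controls
`‖P‖²` by `‖sym P‖² + ‖Curl P‖²`.
-/

open RealInnerProductSpace

namespace IsCoercive

variable {V : Type*} [NormedAddCommGroup V] [InnerProductSpace ℝ V] {B : V →L[ℝ] V →L[ℝ] ℝ}

theorem of_norm_sq_le {K : ℝ} (hK : 0 < K) (h : ∀ x, ‖x‖ ^ 2 ≤ K * B x x) : IsCoercive B := by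
  refine ⟨K⁻¹, inv_pos.mpr hK, fun x => ?_⟩
  rw [mul_assoc, ← sq, inv_mul_le_iff₀ hK]
  exact h x

theorem existsUnique_apply_eq [CompleteSpace V] (hB : IsCoercive B) (F : V →L[ℝ] ℝ) :
    ∃! x, ∀ w, B x w = F w := by
  set φ := hB.continuousLinearEquivOfBilin
  have hφ : ∀ x, (∀ w, B x w = F w) ↔ φ x = (InnerProductSpace.toDual ℝ V).symm F := by
    intro x
    simp only [← hB.continuousLinearEquivOfBilin_apply, ← InnerProductSpace.toDual_symm_apply]
    exact ⟨ext_inner_right ℝ, fun h w => h ▸ rfl⟩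
  exact (existsUnique_congr hφ).mpr (φ.bijective.existsUnique _)

end IsCoercive

theorem norm_add_sq_le_two_mul {E : Type*} [SeminormedAddCommGroup E] (a b : E) :
    ‖a + b‖ ^ 2 ≤ 2 * ‖a‖ ^ 2 + 2 * ‖b‖ ^ 2 := by
  nlinarith [norm_add_le a b, norm_nonneg (a + b), sq_nonneg (‖a‖ - ‖b‖)]

section Micromorphic

variable {H1 H2 L L' : Type*}
  [NormedAddCommGroup H1] [InnerProductSpace ℝ H1] [NormedAddCommGroup H2] [InnerProductSpace ℝ H2]
  [NormedAddCommGroup L] [InnerProductSpace ℝ L] [NormedAddCommGroup L'] [InnerProductSpace ℝ L']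
  (symGrad : H1 →L[ℝ] L) (symP : H2 →L[ℝ] L) (curlP : H2 →L[ℝ] L')
  (Ce Cm : L →L[ℝ] L) (Lc : L' →L[ℝ] L')

noncomputable def micromorphicForm :
    WithLp 2 (H1 × H2) →L[ℝ] WithLp 2 (H1 × H2) →L[ℝ] ℝ :=
  let D := symGrad ∘L WithLp.fstL 2 ℝ H1 H2 - symP ∘L WithLp.sndL 2 ℝ H1 H2
  let S := symP ∘L WithLp.sndL 2 ℝ H1 H2
  let R := curlP ∘L WithLp.sndL 2 ℝ H1 H2
  (innerSL ℝ).bilinearComp (Ce ∘L D) D + (innerSL ℝ).bilinearComp (Cm ∘L S) S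
    + (innerSL ℝ).bilinearComp (Lc ∘L R) R

theorem micromorphicForm_apply (x y : WithLp 2 (H1 × H2)) :
    micromorphicForm symGrad symP curlP Ce Cm Lc x y =
      ⟪Ce (symGrad x.fst - symP x.snd), symGrad y.fst - symP y.snd⟫
        + ⟪Cm (symP x.snd), symP y.snd⟫ + ⟪Lc (curlP x.snd), curlP y.snd⟫ :=
  rfl

variable {symGrad symP curlP Ce Cm Lc}

theorem micromorphicForm_apply_self_ge {ce cm lc : ℝ}
    (hCePD : ∀ a : L, ⟪Ce a, a⟫ ≥ ce * ‖a‖ ^ 2) (hCmPD : ∀ a : L, ⟪Cm a, a⟫ ≥ cm * ‖a‖ ^ 2)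
    (hLcPD : ∀ a : L', ⟪Lc a, a⟫ ≥ lc * ‖a‖ ^ 2) (x : WithLp 2 (H1 × H2)) :
    min ce (min cm lc) * (‖symGrad x.fst - symP x.snd‖ ^ 2 + ‖symP x.snd‖ ^ 2
        + ‖curlP x.snd‖ ^ 2) ≤ micromorphicForm symGrad symP curlP Ce Cm Lc x x := by
  have hce : min ce (min cm lc) ≤ ce := min_le_left _ _
  have hcm : min ce (min cm lc) ≤ cm := (min_le_right _ _).trans (min_le_left _ _)
  have hlc : min ce (min cm lc) ≤ lc := (min_le_right _ _).trans (min_le_right _ _)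
  rw [micromorphicForm_apply]
  nlinarith [hCePD (symGrad x.fst - symP x.snd), hCmPD (symP x.snd), hLcPD (curlP x.snd),
    sq_nonneg ‖symGrad x.fst - symP x.snd‖, sq_nonneg ‖symP x.snd‖, sq_nonneg ‖curlP x.snd‖]

theorem norm_sq_le_of_korn {CK ctil : ℝ} (hCK : 0 ≤ CK)
    (hKorn : ∀ u : H1, ‖u‖ ^ 2 ≤ CK * ‖symGrad u‖ ^ 2) (hctil : 0 ≤ ctil)
    (hKornInc : ∀ P : H2, ‖P‖ ^ 2 ≤ ctil * (‖symP P‖ ^ 2 + ‖curlP P‖ ^ 2))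
    (x : WithLp 2 (H1 × H2)) :
    ‖x‖ ^ 2 ≤ (2 * CK + ctil) * (‖symGrad x.fst - symP x.snd‖ ^ 2 + ‖symP x.snd‖ ^ 2
        + ‖curlP x.snd‖ ^ 2) := by
  have hu : ‖x.fst‖ ^ 2 ≤ CK * (2 * ‖symGrad x.fst - symP x.snd‖ ^ 2 + 2 * ‖symP x.snd‖ ^ 2) :=
    calc ‖x.fst‖ ^ 2 ≤ CK * ‖symGrad x.fst - symP x.snd + symP x.snd‖ ^ 2 := by
          rw [sub_add_cancel]; exact hKorn _
      _ ≤ _ := mul_le_mul_of_nonneg_left (norm_add_sq_le_two_mul _ _) hCK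
  rw [WithLp.prod_norm_sq_eq_of_L2]
  nlinarith [hKornInc x.snd, mul_nonneg hctil (sq_nonneg ‖symGrad x.fst - symP x.snd‖)]

theorem isCoercive_micromorphicForm {ce cm lc CK ctil : ℝ}
    (hce : 0 < ce) (hcm : 0 < cm) (hlc : 0 < lc)
    (hCePD : ∀ a : L, ⟪Ce a, a⟫ ≥ ce * ‖a‖ ^ 2) (hCmPD : ∀ a : L, ⟪Cm a, a⟫ ≥ cm * ‖a‖ ^ 2)
    (hLcPD : ∀ a : L', ⟪Lc a, a⟫ ≥ lc * ‖a‖ ^ 2) (hCK : 0 ≤ CK)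
    (hKorn : ∀ u : H1, ‖u‖ ^ 2 ≤ CK * ‖symGrad u‖ ^ 2) (hctil : 0 < ctil)
    (hKornInc : ∀ P : H2, ‖P‖ ^ 2 ≤ ctil * (‖symP P‖ ^ 2 + ‖curlP P‖ ^ 2)) :
    IsCoercive (micromorphicForm symGrad symP curlP Ce Cm Lc) := by
  have hm : 0 < min ce (min cm lc) := lt_min hce (lt_min hcm hlc)
  refine IsCoercive.of_norm_sq_le (K := (2 * CK + ctil) / min ce (min cm lc))
    (by positivity) fun x => ?_
  rw [div_mul_eq_mul_div, le_div_iff₀ hm]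
  calc ‖x‖ ^ 2 * min ce (min cm lc)
      ≤ (2 * CK + ctil) * (‖symGrad x.fst - symP x.snd‖ ^ 2 + ‖symP x.snd‖ ^ 2
          + ‖curlP x.snd‖ ^ 2) * min ce (min cm lc) :=
        mul_le_mul_of_nonneg_right (norm_sq_le_of_korn hCK hKorn hctil.le hKornInc x) hm.le
    _ ≤ (2 * CK + ctil) * micromorphicForm symGrad symP curlP Ce Cm Lc x x := by
        rw [mul_assoc, mul_comm _ (min ce (min cm lc))]
        exact mul_le_mul_of_nonneg_left (micromorphicForm_apply_self_ge hCePD hCmPD hLcPD x)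
          (by positivity)

end Micromorphic

/-- `H1`, `H2` stand for `H₀¹(Ω;ℝ³)` and `H₀(Curl;Ω)`, `L`, `L'` for the `L²` spaces of matrix
fields, and `symGrad`, `symP`, `curlP` for `u ↦ sym ∇u`, `P ↦ sym P`, `P ↦ Curl P`; `hKorn` and
`hKornInc` are Korn's inequality and the incompatible Korn inequality on `Ω`. -/
theorem stmt8_general {H1 H2 L L' : Type*}
    [NormedAddCommGroup H1] [InnerProductSpace ℝ H1] [CompleteSpace H1]
    [NormedAddCommGroup H2] [InnerProductSpace ℝ H2] [CompleteSpace H2]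
    [NormedAddCommGroup L] [InnerProductSpace ℝ L]
    [NormedAddCommGroup L'] [InnerProductSpace ℝ L']
    (symGrad : H1 →L[ℝ] L) (symP : H2 →L[ℝ] L) (curlP : H2 →L[ℝ] L')
    (Ce Cm : L →L[ℝ] L) (Lc : L' →L[ℝ] L')
    (ce cm lc : ℝ) (hce : 0 < ce) (hcm : 0 < cm) (hlc : 0 < lc)
    (hCePD : ∀ a : L, ⟪Ce a, a⟫ ≥ ce * ‖a‖ ^ 2)
    (hCmPD : ∀ a : L, ⟪Cm a, a⟫ ≥ cm * ‖a‖ ^ 2)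
    (hLcPD : ∀ a : L', ⟪Lc a, a⟫ ≥ lc * ‖a‖ ^ 2)
    (CK : ℝ) (hCK : 0 < CK)
    (hKorn : ∀ u : H1, ‖u‖ ^ 2 ≤ CK * ‖symGrad u‖ ^ 2)
    (ctil : ℝ) (hctil : 0 < ctil)
    (hKornInc : ∀ P : H2, ‖P‖ ^ 2 ≤ ctil * (‖symP P‖ ^ 2 + ‖curlP P‖ ^ 2))
    (f : H1 →L[ℝ] ℝ) (M : H2 →L[ℝ] ℝ) :
    ∃! uP : H1 × H2, ∀ vW : H1 × H2,
      ⟪Ce (symGrad uP.1 - symP uP.2), symGrad vW.1 - symP vW.2⟫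
        + ⟪Cm (symP uP.2), symP vW.2⟫ + ⟪Lc (curlP uP.2), curlP vW.2⟫
      = f vW.1 + M vW.2 := by
  have hB := isCoercive_micromorphicForm hce hcm hlc hCePD hCmPD hLcPD hCK.le hKorn hctil hKornInc
  have hsol := hB.existsUnique_apply_eq (f ∘L WithLp.fstL 2 ℝ H1 H2 + M ∘L WithLp.sndL 2 ℝ H1 H2)
  refine (WithLp.equiv 2 (H1 × H2)).existsUnique_congr (fun x => ?_) |>.mp hsol
  exact (WithLp.equiv 2 (H1 × H2)).forall_congr_left

/-- Existence and uniqueness of weak solutions of the relaxed micromorphic model.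
`H1` plays the role of `H₀¹(Ω;ℝ³)`, `H2` of `H₀(Curl;Ω)` (norm = `H(Curl)`-norm),
`L, L'` of the `L²` spaces of (symmetric) matrix fields; `symGrad`, `symP`, `curlP`
are the bounded operators `u ↦ sym ∇u`, `P ↦ sym P`, `P ↦ Curl P`; the coefficient
tensors act as bounded symmetric operators on `L²`, positive definite (on the
symmetric-valued part for `C_e`, `C_micro`, everywhere for `L_c`); the Korn
inequality and the incompatible Korn inequality are assumed, as valid on a bounded
Lipschitz domain. Then for every `f ∈ H^{-1}` and `M ∈ (H₀(Curl))*` there is a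
unique pair `(u,P)` solving the weak formulation. -/
theorem stmt8 {H1 H2 L L' : Type*}
    [NormedAddCommGroup H1] [InnerProductSpace ℝ H1] [CompleteSpace H1]
    [NormedAddCommGroup H2] [InnerProductSpace ℝ H2] [CompleteSpace H2]
    [NormedAddCommGroup L] [InnerProductSpace ℝ L] [CompleteSpace L]
    [NormedAddCommGroup L'] [InnerProductSpace ℝ L'] [CompleteSpace L']
    (symGrad : H1 →L[ℝ] L) (symP : H2 →L[ℝ] L) (curlP : H2 →L[ℝ] L')
    (Ce Cm : L →L[ℝ] L) (Lc : L' →L[ℝ] L')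
    (hCeSym : ∀ a b : L, ⟪Ce a, b⟫ = ⟪a, Ce b⟫)
    (hCmSym : ∀ a b : L, ⟪Cm a, b⟫ = ⟪a, Cm b⟫)
    (hLcSym : ∀ a b : L', ⟪Lc a, b⟫ = ⟪a, Lc b⟫)
    (ce cm lc : ℝ) (hce : 0 < ce) (hcm : 0 < cm) (hlc : 0 < lc)
    (hCePD : ∀ a : L, ⟪Ce a, a⟫ ≥ ce * ‖a‖ ^ 2)
    (hCmPD : ∀ a : L, ⟪Cm a, a⟫ ≥ cm * ‖a‖ ^ 2)
    (hLcPD : ∀ a : L', ⟪Lc a, a⟫ ≥ lc * ‖a‖ ^ 2)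
    (CK : ℝ) (hCK : 0 < CK)
    (hKorn : ∀ u : H1, ‖u‖ ^ 2 ≤ CK * ‖symGrad u‖ ^ 2)
    (ctil : ℝ) (hctil : 0 < ctil)
    (hKornInc : ∀ P : H2, ‖P‖ ^ 2 ≤ ctil * (‖symP P‖ ^ 2 + ‖curlP P‖ ^ 2))
    (f : H1 →L[ℝ] ℝ) (M : H2 →L[ℝ] ℝ) :
    ∃! uP : H1 × H2, ∀ vW : H1 × H2,
      ⟪Ce (symGrad uP.1 - symP uP.2), symGrad vW.1 - symP vW.2⟫
        + ⟪Cm (symP uP.2), symP vW.2⟫ + ⟪Lc (curlP uP.2), curlP vW.2⟫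
      = f vW.1 + M vW.2 :=
  stmt8_general symGrad symP curlP Ce Cm Lc ce cm lc hce hcm hlc hCePD hCmPD hLcPD CK hCK hKorn ctil
    hctil hKornInc f M
end
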